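/- arXiv:2407.10925 — 2 statements merged into one kernel-verified Lean document; each statement's English description precedes it below -/
import Mathlib

section
/- Let F : (ℝ^N)^d → ℝ^N be monotone (coordinate-wise in each argument) and translation invariant (F(v₁ + r·𝟙, …, v_d + r·𝟙) = F(v₁, …, v_d) + r·𝟙 for all real r). Suppose there exist u ∈ ℝ^N, r ∈ ℝ, and ε ∈ [0, r] such that F(u + (d−1)r·𝟙, u + (d−2)r·𝟙, …, u) ≥ u + (dr − ε)·𝟙. Then for any sequence (v_n) in ℝ^N satisfying v_n ≥ F(v_{n−1}, …, v_{n−d}) for all n ≥ d, there exists u₀ ∈ ℝ^N such that v_n ≥ u₀ + n(r − ε)·𝟙 for all n ≥ 0. -/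
/-- The Kiwi–Soto lemma: if `F : (ℝ^N)^d → ℝ^N` is monotone and translation
invariant and admits a feasible triplet `(u, r, ε)`, then any sequence with
`v n ≥ F (v (n-1), …, v (n-d))` for `n ≥ d` satisfies
`v n ≥ u₀ + n (r - ε) ⋅ 𝟙` for some `u₀` and all `n`. -/
theorem kiwi_soto_lemma (N d : ℕ) (F : (Fin d → (Fin N → ℝ)) → (Fin N → ℝ))
    (hmono : Monotone F)
    (htrans : ∀ (v : Fin d → (Fin N → ℝ)) (r : ℝ),
      F (fun i => v i + fun _ => r) = F v + fun _ => r)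
    (u : Fin N → ℝ) (r ε : ℝ) (hε0 : 0 ≤ ε) (hεr : ε ≤ r)
    (hfeas : u + (fun _ => d * r - ε) ≤
      F (fun i : Fin d => u + fun _ => ((d - 1 - (i : ℕ) : ℕ) : ℝ) * r))
    (v : ℕ → (Fin N → ℝ))
    (hrec : ∀ n, d ≤ n → F (fun i : Fin d => v (n - 1 - (i : ℕ))) ≤ v n) :
    ∃ u₀ : Fin N → ℝ, ∀ n : ℕ, u₀ + (fun _ => (n : ℝ) * (r - ε)) ≤ v n := by
  rcases Nat.eq_zero_or_pos N with hN | hN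
  · subst hN
    exact ⟨v 0, fun n i => i.elim0⟩
  rcases Nat.eq_zero_or_pos d with hd | hd
  · subst hd
    exfalso
    have h := htrans (fun _ => 0) 1
    have heq : (fun i : Fin 0 => (fun _ : Fin 0 => (0 : Fin N → ℝ)) i + fun _ => (1:ℝ))
        = (fun _ : Fin 0 => (0 : Fin N → ℝ)) := by
      funext i; exact i.elim0
    rw [heq] at h
    have h2 := congrFun h ⟨0, hN⟩
    simp only [Pi.add_apply] at h2
    linarith
  -- main case : d ≥ 1, N ≥ 1
  classical
  have hA : (Finset.range d ×ˢ (Finset.univ : Finset (Fin N))).Nonempty :=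
    ⟨(0, ⟨0, hN⟩), by simp [hd]⟩
  set a : ℝ := (Finset.range d ×ˢ (Finset.univ : Finset (Fin N))).inf' hA
      (fun p => v p.1 p.2 - u p.2 - p.1 * (r - ε)) with ha
  have key : ∀ n : ℕ, ∀ i : Fin N, u i + a + n * (r - ε) ≤ v n i := by
    intro n
    induction n using Nat.strong_induction_on with
    | _ n ih =>
      intro i
      by_cases hnd : n < d
      · have hm : (n, i) ∈ Finset.range d ×ˢ (Finset.univ : Finset (Fin N)) := by
          simp [hnd]
        have hle := Finset.inf'_le (fun p : ℕ × Fin N => v p.1 p.2 - u p.2 - p.1 * (r - ε)) hm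
        rw [← ha] at hle
        simp only at hle
        linarith
      · have hdn : d ≤ n := le_of_not_gt hnd
        have h1 : F (fun j : Fin d => v (n - 1 - (j : ℕ))) ≤ v n := hrec n hdn
        have h3 : F (fun j : Fin d => u + fun _ => ((d - 1 - (j : ℕ) : ℕ) : ℝ) * r)
            + (fun _ => a + ((n : ℝ) - d) * (r - ε) - ((d : ℝ) - 1) * ε)
            ≤ F (fun j : Fin d => v (n - 1 - (j : ℕ))) := by
          rw [← htrans]
          apply hmono
          intro j k
          have hj : (j : ℕ) < d := j.2
          have hv := ih (n - 1 - (j : ℕ)) (by omega) k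
          have c1 : ((n - 1 - (j : ℕ) : ℕ) : ℝ) = (n : ℝ) - 1 - (j : ℕ) := by
            rw [Nat.sub_sub, Nat.cast_sub (by omega)]
            push_cast; ring
          have c2 : ((d - 1 - (j : ℕ) : ℕ) : ℝ) = (d : ℝ) - 1 - (j : ℕ) := by
            rw [Nat.sub_sub, Nat.cast_sub (by omega)]
            push_cast; ring
          rw [c1] at hv
          simp only [Pi.add_apply]
          rw [c2]
          nlinarith [mul_nonneg (Nat.cast_nonneg (j : ℕ) : (0:ℝ) ≤ (j : ℕ)) hε0]
        have h4 := add_le_add_left hfeas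
          (fun _ : Fin N => a + ((n : ℝ) - d) * (r - ε) - ((d : ℝ) - 1) * ε)
        have hfinal := le_trans (le_trans h4 h3) h1
        have hp := hfinal i
        simp only [Pi.add_apply] at hp
        linarith
  refine ⟨u + fun _ => a, fun n i => ?_⟩
  simp only [Pi.add_apply]
  linarith [key n i]
end

section
/- Let F : (ℝ^N)^d → ℝ^N be monotone and translation invariant, and suppose (u, r, ε) is a feasible triplet for F (i.e., F(u + (d−1)r·𝟙, …, u) ≥ u + (dr − ε)·𝟙 with 0 ≤ ε ≤ r). Define a sequence by v_k = u + k·r·𝟙 for 0 ≤ k ≤ d−1 and v_n = F(v_{n−1}, …, v_{n−d}) for n ≥ d. Then v_n ≥ u + (n r − (n − d + 1)ε)·𝟙 for all n ≥ d. -/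
/-- If `(u, r, ε)` is a feasible triplet for a monotone, translation-invariant `F`,
and the sequence starts with `v k = u + k r 𝟙` for `k < d` and iterates
`v n = F (v (n-1), …, v (n-d))` for `n ≥ d`, then
`v n ≥ u + (n r - (n - d + 1) ε) 𝟙` for all `n ≥ d`. -/
theorem feasible_triplet_iteration (N d : ℕ)
    (F : (Fin d → (Fin N → ℝ)) → (Fin N → ℝ))
    (hmono : Monotone F)
    (htrans : ∀ (v : Fin d → (Fin N → ℝ)) (r : ℝ),
      F (fun i => v i + fun _ => r) = F v + fun _ => r)
    (u : Fin N → ℝ) (r ε : ℝ) (hε0 : 0 ≤ ε) (hεr : ε ≤ r)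
    (hfeas : u + (fun _ => d * r - ε) ≤
      F (fun i : Fin d => u + fun _ => ((d - 1 - (i : ℕ) : ℕ) : ℝ) * r))
    (v : ℕ → (Fin N → ℝ))
    (hinit : ∀ k, k < d → v k = u + fun _ => (k : ℝ) * r)
    (hrec : ∀ n, d ≤ n → v n = F (fun i : Fin d => v (n - 1 - (i : ℕ)))) :
    ∀ n, d ≤ n → u + (fun _ => (n : ℝ) * r - ((n - d + 1 : ℕ) : ℝ) * ε) ≤ v n := by
  rcases Nat.eq_zero_or_pos d with hd | hd
  · subst hd
    rcases Nat.eq_zero_or_pos N with hN | hN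
    · subst hN
      intro n _ x
      exact x.elim0
    · exfalso
      have h := htrans (fun _ => (0 : Fin N → ℝ)) 1
      rw [show (fun i : Fin 0 => (0 : Fin N → ℝ) + fun _ => (1 : ℝ))
          = (fun _ : Fin 0 => (0 : Fin N → ℝ)) from funext fun i => i.elim0] at h
      have h2 := congrFun h ⟨0, hN⟩
      simp at h2
  · intro n
    induction n using Nat.strong_induction_on with
    | _ n IH =>
    intro hn
    have hn1 : 1 ≤ n := le_trans hd hn
    rw [hrec n hn]
    set t : ℝ := ((n - d : ℕ) : ℝ) * (r - ε) with ht
    have hnd : ((n - d : ℕ) : ℝ) = (n : ℝ) - d := by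
      rw [Nat.cast_sub hn]
    have ht0 : 0 ≤ t := mul_nonneg (Nat.cast_nonneg _) (by linarith)
    have hkey : (fun i : Fin d => (u + fun _ => ((d - 1 - (i : ℕ) : ℕ) : ℝ) * r) + fun _ => t)
        ≤ fun i : Fin d => v (n - 1 - (i : ℕ)) := by
      intro i
      dsimp only
      have hi : (i : ℕ) < d := i.isLt
      have hca : ((d - 1 - (i : ℕ) : ℕ) : ℝ) = (d : ℝ) - 1 - (i : ℕ) := by
        rw [Nat.cast_sub (by omega), Nat.cast_sub (by omega)]
        push_cast; ring
      rcases Nat.lt_or_ge (n - 1 - (i : ℕ)) d with hm | hm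
      · rw [hinit _ hm]
        intro x
        simp only [Pi.add_apply]
        have hcm : ((n - 1 - (i : ℕ) : ℕ) : ℝ) = (n : ℝ) - 1 - (i : ℕ) := by
          rw [Nat.sub_sub, Nat.cast_sub (by omega)]
          push_cast; ring
        rw [hcm, hca, ht, hnd]
        have hεn : 0 ≤ ((n : ℝ) - d) * ε := by
          rw [← hnd]; exact mul_nonneg (Nat.cast_nonneg _) hε0
        nlinarith
      · have hIH := IH (n - 1 - (i : ℕ)) (by omega) hm
        refine le_trans ?_ hIH
        intro x
        simp only [Pi.add_apply]
        have hcm : ((n - 1 - (i : ℕ) : ℕ) : ℝ) = (n : ℝ) - 1 - (i : ℕ) := by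
          rw [Nat.sub_sub, Nat.cast_sub (by omega)]
          push_cast; ring
        have hcm2 : ((n - 1 - (i : ℕ) - d + 1 : ℕ) : ℝ) = (n : ℝ) - 1 - (i : ℕ) - d + 1 := by
          push_cast [Nat.cast_sub hm, hcm]
          ring
        rw [hcm, hca, hcm2, ht, hnd]
        have hiε : 0 ≤ ((i : ℕ) : ℝ) * ε := mul_nonneg (Nat.cast_nonneg _) hε0
        nlinarith
    calc u + (fun _ => (n : ℝ) * r - ((n - d + 1 : ℕ) : ℝ) * ε)
        = (u + fun _ => (d : ℝ) * r - ε) + fun _ => t := by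
          funext x
          simp only [Pi.add_apply]
          have : ((n - d + 1 : ℕ) : ℝ) = (n : ℝ) - d + 1 := by
            push_cast [Nat.cast_sub hn]; ring
          rw [this, ht, hnd]; ring
      _ ≤ F (fun i : Fin d => u + fun _ => ((d - 1 - (i : ℕ) : ℕ) : ℝ) * r) + fun _ => t :=
          add_le_add_left hfeas _
      _ = F (fun i : Fin d => (u + fun _ => ((d - 1 - (i : ℕ) : ℕ) : ℝ) * r) + fun _ => t) :=
          (htrans _ t).symm
      _ ≤ F (fun i : Fin d => v (n - 1 - (i : ℕ))) := hmono hkey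
end
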